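/- Let A be a nonsingular M-tensor and suppose S_l = {x ≥ 0 : A x^{m-1} ≤ b} is nonempty. Then S_l has a maximal element x* which is also the maximal nonnegative solution of A x^{m-1} = b; i.e., A (x*)^{m-1} = b and x ≤ x* for every x ∈ S_l. -/

import Mathlib

open Finset Filter

noncomputable section

/-- Action of an order-(p+1) tensor (p trailing indices):
`(A x^{p})_i = ∑ a_{i i₂ … i_{p+1}} x_{i₂} ⋯ x_{i_{p+1}}`. -/
def tapp (p n : ℕ) (A : Fin n → (Fin p → Fin n) → ℝ) (x : Fin n → ℝ) : Fin n → ℝ :=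
  fun i => ∑ js : Fin p → Fin n, A i js * ∏ j, x (js j)

/-- A `Z`-tensor: all off-diagonal entries are nonpositive. -/
def IsZTensor (p n : ℕ) (A : Fin n → (Fin p → Fin n) → ℝ) : Prop :=
  ∀ i js, (∃ j, js j ≠ i) → A i js ≤ 0

/-- The identity tensor. -/
def identT (p n : ℕ) : Fin n → (Fin p → Fin n) → ℝ :=
  fun i js => if ∀ j, js j = i then 1 else 0

/-- Spectral radius of a tensor: sup of moduli of (real) eigenvalues. -/
def tensorSpecRad (p n : ℕ) (B : Fin n → (Fin p → Fin n) → ℝ) : ℝ :=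
  sSup {r : ℝ | ∃ lam : ℝ, ∃ x : Fin n → ℝ, x ≠ 0 ∧
    (∀ i, tapp p n B x i = lam * x i ^ p) ∧ r = |lam|}

/-- A nonsingular M-tensor: `A = s I − B` with `B ≥ 0` and `s > ρ(B)`. -/
def IsMTensor (p n : ℕ) (A : Fin n → (Fin p → Fin n) → ℝ) : Prop :=
  ∃ s : ℝ, ∃ B : Fin n → (Fin p → Fin n) → ℝ,
    (∀ i js, 0 ≤ B i js) ∧ tensorSpecRad p n B < s ∧
    ∀ i js, A i js = s * identT p n i js - B i js

/-- The diagonal-part tensor of `A`. -/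
def diagT (p n : ℕ) (A : Fin n → (Fin p → Fin n) → ℝ) : Fin n → (Fin p → Fin n) → ℝ :=
  fun i js => if ∀ j, js j = i then A i (fun _ => i) else 0

/-- The majorization matrix of `A`: `M_{ij} = a_{i j … j}`. -/
def majMatrix (p n : ℕ) (A : Fin n → (Fin p → Fin n) → ℝ) : Matrix (Fin n) (Fin n) ℝ :=
  fun i j => A i (fun _ => j)

/-- The "mixed index" part `N = M_tensor − A`: zero on constant trailing tuples,
`−A` elsewhere. -/
def NPart (p n : ℕ) (A : Fin n → (Fin p → Fin n) → ℝ) : Fin n → (Fin p → Fin n) → ℝ :=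
  fun i js => if ∀ j' j'', js j' = js j'' then 0 else -A i js

/-- A nonsingular M-matrix: a Z-matrix with `M y > 0` for some `y > 0`. -/
def IsMMatrix (n : ℕ) (P : Matrix (Fin n) (Fin n) ℝ) : Prop :=
  (∀ i j, i ≠ j → P i j ≤ 0) ∧ ∃ y : Fin n → ℝ, (∀ i, 0 < y i) ∧ ∀ i, 0 < P.mulVec y i

/-- Spectral radius of a real matrix (via its complex spectrum). -/
def matSpecRad (n : ℕ) (J : Matrix (Fin n) (Fin n) ℝ) : ℝ :=
  sSup {r : ℝ | ∃ μ ∈ spectrum ℂ (J.map (Complex.ofReal ·)), r = ‖μ‖}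

/-- Irreducibility of a matrix. -/
def MatIrreducible (n : ℕ) (J : Matrix (Fin n) (Fin n) ℝ) : Prop :=
  ∀ S : Finset (Fin n), S.Nonempty → S ≠ Finset.univ → ∃ i ∈ S, ∃ j, j ∉ S ∧ J i j ≠ 0

/-!
Write `A = s I - B` with `B ≥ 0` and `ρ(B) < s`, so that `x ∈ S_l` iff `x ≥ 0` and
`s xᵢ^{m-1} ≤ bᵢ + (B x^{m-1})ᵢ` for all `i`. As `x ↦ B x^{m-1}` is monotone on `x ≥ 0`, `S_l` is
closed under coordinatewise maxima. It is also compact: if it were unbounded, rescaling a sequence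
in `S_l` that escapes to infinity onto the unit sphere gives in the limit some `u ≥ 0`, `u ≠ 0`
with `s u^{m-1} ≤ B u^{m-1}`, and a Perron–Frobenius argument turns this into an eigenvalue
`λ ≥ s` of `B`, contradicting `ρ(B) < s`. For the latter, the perturbed tensors `B + ε` are
positive, so minimising `λ` subject to `(B + ε) v^{m-1} ≤ λ v^{m-1}` over the unit sphere yields
a positive eigenpair whose eigenvalue is at least `s`, and these eigenpairs converge as `ε → 0`.

A compact sup-closed set has a greatest element `x*`, and `A x*^{m-1} = b` because a coordinate with slack could be increased without leaving `S_l`.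
-/

open Topology

theorem SupClosed.exists_isGreatest_of_isCompact {ι : Type*} [Fintype ι] {K : Set (ι → ℝ)}
    (hsup : SupClosed K) (hK : IsCompact K) (hK0 : K.Nonempty) : ∃ x, IsGreatest K x := by
  -- a maximiser `x` of `∑ i, x i` satisfies `x ⊔ y = x` for every `y ∈ K`
  obtain ⟨x, hx, hmax⟩ := hK.exists_isMaxOn hK0
    (continuous_finsetSum univ fun i _ => continuous_apply i).continuousOn
  refine ⟨x, hx, fun y hy i => ?_⟩
  have hle : x ≤ x ⊔ y := le_sup_left
  have heq := (sum_eq_sum_iff_of_le fun i _ => hle i).1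
    (le_antisymm (sum_le_sum fun i _ => hle i) (hmax (hsup hx hy)))
  exact (le_sup_right : y ≤ x ⊔ y) i |>.trans_eq (heq i (mem_univ i)).symm

section

variable {p n : ℕ}

@[fun_prop]
theorem Continuous.tapp {X : Type*} [TopologicalSpace X] {B : X → Fin n → (Fin p → Fin n) → ℝ}
    {f : X → Fin n → ℝ} (hB : Continuous B) (hf : Continuous f) :
    Continuous fun x => tapp p n (B x) (f x) := by
  unfold _root_.tapp
  fun_prop

theorem tapp_mono {B : Fin n → (Fin p → Fin n) → ℝ} (hB : ∀ i js, 0 ≤ B i js)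
    {x y : Fin n → ℝ} (hx : 0 ≤ x) (hxy : x ≤ y) : tapp p n B x ≤ tapp p n B y := fun i =>
  sum_le_sum fun js _ => mul_le_mul_of_nonneg_left
    (prod_le_prod (fun j _ => hx (js j)) fun j _ => hxy (js j)) (hB i js)

theorem tapp_mono_left {B C : Fin n → (Fin p → Fin n) → ℝ} (hBC : ∀ i js, B i js ≤ C i js)
    {x : Fin n → ℝ} (hx : 0 ≤ x) : tapp p n B x ≤ tapp p n C x := fun i =>
  sum_le_sum fun js _ => mul_le_mul_of_nonneg_right (hBC i js) (prod_nonneg fun j _ => hx (js j))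

theorem tapp_lt_tapp (hp : p ≠ 0) {C : Fin n → (Fin p → Fin n) → ℝ} (hC : ∀ i js, 0 < C i js)
    {x y : Fin n → ℝ} (hx : 0 ≤ x) (hxy : x ≤ y) {j : Fin n} (hj : x j < y j) (i : Fin n) :
    tapp p n C x i < tapp p n C y i := by
  refine sum_lt_sum (fun js _ => mul_le_mul_of_nonneg_left
    (prod_le_prod (fun k _ => hx (js k)) fun k _ => hxy (js k)) (hC i js).le)
    ⟨fun _ => j, mem_univ _, mul_lt_mul_of_pos_left ?_ (hC i _)⟩
  simpa only [prod_const, card_univ, Fintype.card_fin] using pow_lt_pow_left₀ hj (hx j) hp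

theorem tapp_zero (hp : p ≠ 0) (C : Fin n → (Fin p → Fin n) → ℝ) : tapp p n C 0 = 0 := by
  ext i
  simp [tapp, zero_pow hp]

theorem tapp_pos (hp : p ≠ 0) {C : Fin n → (Fin p → Fin n) → ℝ} (hC : ∀ i js, 0 < C i js)
    {x : Fin n → ℝ} (hx : 0 ≤ x) (hx0 : x ≠ 0) (i : Fin n) : 0 < tapp p n C x i := by
  obtain ⟨j, hj⟩ := Function.ne_iff.mp hx0
  simpa [tapp_zero hp] using tapp_lt_tapp hp hC le_rfl hx ((hx j).lt_of_ne (Ne.symm hj)) i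

theorem tapp_smul (B : Fin n → (Fin p → Fin n) → ℝ) (c : ℝ) (x : Fin n → ℝ) :
    tapp p n B (c • x) = c ^ p • tapp p n B x := by
  ext i
  simp only [tapp, Pi.smul_apply, smul_eq_mul, prod_mul_distrib, prod_const, card_univ,
    Fintype.card_fin, mul_sum]
  exact sum_congr rfl fun _ _ => by ring

theorem tapp_identT (x : Fin n → ℝ) (i : Fin n) : tapp p n (identT p n) x i = x i ^ p := by
  have hconst (js : Fin p → Fin n) : (∀ j, js j = i) ↔ js = fun _ => i := funext_iff.symm
  simp [tapp, identT, hconst]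

theorem tapp_eq_of_eq_smul_identT_sub {A B : Fin n → (Fin p → Fin n) → ℝ} {s : ℝ}
    (hA : ∀ i js, A i js = s * identT p n i js - B i js) (x : Fin n → ℝ) (i : Fin n) :
    tapp p n A x i = s * x i ^ p - tapp p n B x i := by
  rw [← tapp_identT x i]
  simp only [tapp, hA, mul_sum, ← sum_sub_distrib]
  exact sum_congr rfl fun _ _ => by ring

theorem abs_le_sum_abs_of_tapp_eq {B : Fin n → (Fin p → Fin n) → ℝ} {lam : ℝ} {x : Fin n → ℝ}
    (hx : x ≠ 0) (heig : ∀ i, tapp p n B x i = lam * x i ^ p) :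
    |lam| ≤ ∑ i, ∑ js, |B i js| := by
  obtain ⟨j, hj⟩ := Function.ne_iff.mp hx
  have : Nonempty (Fin n) := ⟨j⟩
  obtain ⟨i, hi⟩ := Finite.exists_max fun i => |x i|
  have hxi : 0 < |x i| ^ p := pow_pos ((abs_pos.mpr hj).trans_le (hi j)) p
  have key : |lam| * |x i| ^ p ≤ (∑ js, |B i js|) * |x i| ^ p := calc
    |lam| * |x i| ^ p = |tapp p n B x i| := by rw [heig, abs_mul, abs_pow]
    _ ≤ ∑ js, |B i js| * ∏ k, |x (js k)| := by
      simpa only [tapp, abs_mul, abs_prod] using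
        abs_sum_le_sum_abs (fun js => B i js * ∏ k, x (js k)) univ
    _ ≤ ∑ js, |B i js| * |x i| ^ p := sum_le_sum fun js _ => mul_le_mul_of_nonneg_left
      (by simpa using prod_le_prod (s := univ) (fun k _ => abs_nonneg _) fun k _ => hi (js k))
      (abs_nonneg _)
    _ = (∑ js, |B i js|) * |x i| ^ p := by rw [sum_mul]
  exact (le_of_mul_le_mul_right key hxi).trans <| single_le_sum (f := fun i => ∑ js, |B i js|)
    (fun i _ => sum_nonneg fun _ _ => abs_nonneg _) (mem_univ i)

theorem abs_le_tensorSpecRad {B : Fin n → (Fin p → Fin n) → ℝ} {lam : ℝ} {x : Fin n → ℝ}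
    (hx : x ≠ 0) (heig : ∀ i, tapp p n B x i = lam * x i ^ p) : |lam| ≤ tensorSpecRad p n B :=
  le_csSup ⟨∑ i, ∑ js, |B i js|, by
    rintro r ⟨lam, x, hx, heig, rfl⟩
    exact abs_le_sum_abs_of_tapp_eq hx heig⟩ ⟨lam, x, hx, heig, rfl⟩

theorem le_of_le_tapp_of_tapp_eq {C : Fin n → (Fin p → Fin n) → ℝ} (hC : ∀ i js, 0 ≤ C i js)
    {u : Fin n → ℝ} (hu : 0 ≤ u) (hu0 : u ≠ 0) {s : ℝ} (hsu : ∀ i, s * u i ^ p ≤ tapp p n C u i)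
    {lam : ℝ} {v : Fin n → ℝ} (hv : ∀ i, 0 < v i) (heig : ∀ i, tapp p n C v i = lam * v i ^ p) :
    s ≤ lam := by
  obtain ⟨j, hj⟩ := Function.ne_iff.mp hu0
  have : Nonempty (Fin n) := ⟨j⟩
  -- `t` is the least scalar with `u ≤ t • v`, and the two agree at `i`
  obtain ⟨i, hi⟩ := Finite.exists_max fun i => u i / v i
  set t := u i / v i
  have hut : u ≤ t • v := fun k => (div_le_iff₀ (hv k)).mp (hi k)
  have hui : u i = t * v i := (div_mul_cancel₀ _ (hv i).ne').symm
  have hupos : 0 < u i := by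
    rw [hui]
    exact mul_pos ((div_pos ((hu j).lt_of_ne (Ne.symm hj)) (hv j)).trans_le (hi j)) (hv i)
  have key : s * u i ^ p ≤ lam * u i ^ p := calc
    s * u i ^ p ≤ tapp p n C u i := hsu i
    _ ≤ tapp p n C (t • v) i := tapp_mono hC hu hut i
    _ = lam * u i ^ p := by
      rw [tapp_smul, Pi.smul_apply, heig, hui, smul_eq_mul, mul_pow]
      ring
  exact le_of_mul_le_mul_right key (pow_pos hupos p)

theorem exists_lt_forall_tapp_le {C : Fin n → (Fin p → Fin n) → ℝ} {v : Fin n → ℝ} {lam : ℝ}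
    (h : ∀ i, tapp p n C v i < lam * v i ^ p) :
    ∃ lam' < lam, ∀ i, tapp p n C v i ≤ lam' * v i ^ p := by
  have hev : ∀ᶠ lam' in 𝓝[<] lam, ∀ i, tapp p n C v i < lam' * v i ^ p :=
    eventually_all.2 fun i => ((tendsto_id.mul_const (v i ^ p)).eventually_const_lt
      (h i)).filter_mono nhdsWithin_le_nhds
  obtain ⟨lam', hlt, hle⟩ := (eventually_mem_nhdsWithin.and hev).exists
  exact ⟨lam', hlt, fun i => (hle i).le⟩

theorem exists_forall_tapp_lt_of_tapp_lt (hp : p ≠ 0) {C : Fin n → (Fin p → Fin n) → ℝ}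
    (hC : ∀ i js, 0 < C i js) {v : Fin n → ℝ} (hv : ∀ i, 0 < v i) {lam : ℝ}
    (hle : ∀ i, tapp p n C v i ≤ lam * v i ^ p) {i₀ : Fin n}
    (hlt : tapp p n C v i₀ < lam * v i₀ ^ p) :
    ∃ w : Fin n → ℝ, (∀ i, 0 < w i) ∧ ∀ i, tapp p n C w i < lam * w i ^ p := by
  obtain ⟨ε, ⟨hε, hεv⟩, hεlt⟩ :
      ∃ ε ∈ Set.Ioo 0 (v i₀), tapp p n C v i₀ < lam * (v i₀ - ε) ^ p := by
    have hcont : Continuous fun ε : ℝ => lam * (v i₀ - ε) ^ p := by fun_prop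
    have hsmall : ∀ᶠ ε in 𝓝[>] 0, ε ∈ Set.Ioo 0 (v i₀) := Ioo_mem_nhdsGT (hv i₀)
    have hlim : Tendsto (fun ε => lam * (v i₀ - ε) ^ p) (𝓝 0) (𝓝 (lam * v i₀ ^ p)) := by
      simpa using hcont.tendsto 0
    exact (hsmall.and ((hlim.eventually_const_lt hlt).filter_mono nhdsWithin_le_nhds)).exists
  set w := Function.update v i₀ (v i₀ - ε)
  have hwi₀ : w i₀ = v i₀ - ε := Function.update_self ..
  have hw (k) (hk : k ≠ i₀) : w k = v k := Function.update_of_ne hk ..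
  have hwv : w ≤ v := fun k => by
    rcases eq_or_ne k i₀ with rfl | hk
    · linarith
    · rw [hw k hk]
  have hwpos (k) : 0 < w k := by
    rcases eq_or_ne k i₀ with rfl | hk
    · linarith
    · rw [hw k hk]; exact hv k
  refine ⟨w, hwpos, fun k => ?_⟩
  have hdec := tapp_lt_tapp hp hC (fun k => (hwpos k).le) hwv (j := i₀) (by linarith) k
  rcases eq_or_ne k i₀ with rfl | hk
  · rw [hwi₀]; linarith
  · rw [hw k hk]; linarith [hle k]

theorem exists_pos_eigenvector_of_pos [Nonempty (Fin n)] (hp : p ≠ 0)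
    {C : Fin n → (Fin p → Fin n) → ℝ} (hC : ∀ i js, 0 < C i js) :
    ∃ lam, ∃ v : Fin n → ℝ, ‖v‖ = 1 ∧ (∀ i, 0 < v i) ∧ ∀ i, tapp p n C v i = lam * v i ^ p := by
  set R := ∑ i, ∑ js, C i js
  set T : Set (ℝ × (Fin n → ℝ)) := {q | q.1 ∈ Set.Icc 0 R ∧ q.2 ∈ Metric.sphere 0 1 ∧
    0 ≤ q.2 ∧ ∀ i, tapp p n C q.2 i ≤ q.1 * q.2 i ^ p}
  have hT : IsCompact T := by
    refine (isCompact_Icc.prod (isCompact_sphere 0 1)).of_isClosed_subset ?_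
      fun q hq => ⟨hq.1, hq.2.1⟩
    refine (isClosed_Icc.preimage continuous_fst).inter <|
      (Metric.isClosed_sphere.preimage continuous_snd).inter <|
      (isClosed_Ici.preimage continuous_snd).inter ?_
    show IsClosed {q : ℝ × (Fin n → ℝ) | ∀ i, tapp p n C q.2 i ≤ q.1 * q.2 i ^ p}
    rw [Set.ofPred_forall]
    exact isClosed_iInter fun i => isClosed_le (by fun_prop) (by fun_prop)
  have hTne : T.Nonempty := by
    have hrow (i) : ∑ js, C i js ≤ R := single_le_sum (f := fun i => ∑ js, C i js)
      (fun i _ => sum_nonneg fun js _ => (hC i js).le) (mem_univ i)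
    have hR : 0 ≤ R := sum_nonneg fun i _ => sum_nonneg fun js _ => (hC i js).le
    exact ⟨(R, fun _ => 1), ⟨hR, le_rfl⟩, by simp [pi_norm_const], fun _ => zero_le_one,
      fun i => by simpa [tapp] using hrow i⟩
  obtain ⟨⟨lam, v⟩, ⟨⟨-, hlamR⟩, hvs, hv0, hle⟩, hmin⟩ :=
    hT.exists_isMinOn hTne continuous_fst.continuousOn
  dsimp only at hlamR hvs hv0 hle
  have hv1 : ‖v‖ = 1 := mem_sphere_zero_iff_norm.mp hvs
  have hvpos (i) : 0 < v i := by
    refine (hv0 i).lt_of_ne fun h => ?_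
    have := (tapp_pos hp hC hv0 (norm_ne_zero_iff.mp (by simp [hv1])) i).trans_le (hle i)
    simp [← h, zero_pow hp] at this
  refine ⟨lam, v, hv1, hvpos, ?_⟩
  -- at a coordinate with slack, `v` could be shrunk and `lam` lowered, contradicting minimality
  by_contra! ⟨i₀, hi₀⟩
  obtain ⟨w, hwpos, hw⟩ := exists_forall_tapp_lt_of_tapp_lt hp hC hvpos hle ((hle i₀).lt_of_ne hi₀)
  obtain ⟨lam', hlam', hw'⟩ := exists_lt_forall_tapp_le hw
  have hw0 : w ≠ 0 := fun h => (hwpos (Classical.arbitrary _)).ne' (by simp [h])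
  have hmem : (lam', ‖w‖⁻¹ • w) ∈ T := by
    refine ⟨⟨?_, hlam'.le.trans hlamR⟩, ?_, smul_nonneg (by positivity) fun i => (hwpos i).le,
      fun i => ?_⟩
    · have := (tapp_pos hp hC (fun i => (hwpos i).le) hw0 (Classical.arbitrary _)).trans_le (hw' _)
      exact (pos_of_mul_pos_left this (pow_nonneg (hwpos _).le p)).le
    · simp [norm_smul, hw0]
    · simp only [tapp_smul, Pi.smul_apply, smul_eq_mul, mul_pow]
      nlinarith [hw' i, pow_nonneg (inv_nonneg.mpr (norm_nonneg w)) p]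
  exact hlam'.not_ge (hmin hmem)

theorem exists_eigenpair_ge_of_le_tapp (hp : p ≠ 0) {B : Fin n → (Fin p → Fin n) → ℝ}
    (hB : ∀ i js, 0 ≤ B i js) {u : Fin n → ℝ} (hu : 0 ≤ u) (hu0 : u ≠ 0) {s : ℝ}
    (hsu : ∀ i, s * u i ^ p ≤ tapp p n B u i) :
    ∃ lam, ∃ x : Fin n → ℝ, x ≠ 0 ∧ (∀ i, tapp p n B x i = lam * x i ^ p) ∧ s ≤ lam := by
  obtain ⟨j, -⟩ := Function.ne_iff.mp hu0
  have : Nonempty (Fin n) := ⟨j⟩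
  set C : ℕ → Fin n → (Fin p → Fin n) → ℝ := fun k i js => B i js + 1 / (k + 1)
  have hBC (k i js) : B i js ≤ C k i js := le_add_of_nonneg_right (by positivity)
  have hCB : Tendsto C atTop (𝓝 B) := tendsto_pi_nhds.2 fun i => tendsto_pi_nhds.2 fun js => by
    simpa [C] using tendsto_const_nhds.add (tendsto_one_div_add_atTop_nhds_zero_nat (𝕜 := ℝ))
  choose lam v hv1 hvpos heig using fun k => exists_pos_eigenvector_of_pos hp (C := C k)
    fun i js => (hB i js).trans_lt (lt_add_of_pos_right _ (by positivity))
  set R := ∑ i, ∑ js, (B i js + 1)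
  have hlam (k) : lam k ∈ Set.Icc s R := by
    refine ⟨le_of_le_tapp_of_tapp_eq (fun i js => (hB i js).trans (hBC k i js)) hu hu0
      (fun i => (hsu i).trans (tapp_mono_left (hBC k) hu i)) (hvpos k) (heig k), ?_⟩
    refine (le_abs_self _).trans <| (abs_le_sum_abs_of_tapp_eq
      (norm_ne_zero_iff.mp (by simp [hv1 k])) (heig k)).trans ?_
    refine sum_le_sum fun i _ => sum_le_sum fun js _ => ?_
    rw [abs_of_nonneg ((hB i js).trans (hBC k i js))]
    exact add_le_add_right (div_le_one_of_le₀ (by simp) (by positivity) : 1 / ((k : ℝ) + 1) ≤ 1) _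
  obtain ⟨⟨lam₀, v₀⟩, ⟨hlam₀, hv₀⟩, φ, hφ, hlim⟩ :=
    (isCompact_Icc.prod (isCompact_sphere 0 1)).tendsto_subseq (x := fun k => (lam k, v k))
      fun k => ⟨hlam k, mem_sphere_zero_iff_norm.mpr (hv1 k)⟩
  refine ⟨lam₀, v₀, ne_zero_of_mem_unit_sphere ⟨v₀, hv₀⟩, fun i => ?_, hlam₀.1⟩
  have hv : Tendsto (fun k => v (φ k)) atTop (𝓝 v₀) := (continuous_snd.tendsto _).comp hlim
  have hl : Tendsto (fun k => lam (φ k)) atTop (𝓝 lam₀) := (continuous_fst.tendsto _).comp hlim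
  have hleft : Tendsto (fun k => tapp p n (C (φ k)) (v (φ k)) i) atTop (𝓝 (tapp p n B v₀ i)) :=
    (((continuous_apply i).comp (Continuous.tapp continuous_fst continuous_snd)).tendsto
      (B, v₀)).comp ((hCB.comp hφ.tendsto_atTop).prodMk_nhds hv)
  have hright : Tendsto (fun k => lam (φ k) * v (φ k) i ^ p) atTop (𝓝 (lam₀ * v₀ i ^ p)) :=
    hl.mul ((((continuous_apply i).tendsto _).comp hv).pow p)
  exact tendsto_nhds_unique (hleft.congr fun k => heig (φ k) i) hright

theorem le_tensorSpecRad_of_le_tapp (hp : p ≠ 0) {B : Fin n → (Fin p → Fin n) → ℝ}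
    (hB : ∀ i js, 0 ≤ B i js) {u : Fin n → ℝ} (hu : 0 ≤ u) (hu0 : u ≠ 0) {s : ℝ}
    (hsu : ∀ i, s * u i ^ p ≤ tapp p n B u i) : s ≤ tensorSpecRad p n B := by
  obtain ⟨lam, x, hx, heig, hs⟩ := exists_eigenpair_ge_of_le_tapp hp hB hu hu0 hsu
  exact hs.trans ((le_abs_self lam).trans (abs_le_tensorSpecRad hx heig))
def subSolutions (p n : ℕ) (A : Fin n → (Fin p → Fin n) → ℝ) (b : Fin n → ℝ) :
    Set (Fin n → ℝ) :=
  {x | 0 ≤ x ∧ tapp p n A x ≤ b}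

section SubSolutions

variable {A B : Fin n → (Fin p → Fin n) → ℝ} {s : ℝ} {b : Fin n → ℝ}

theorem isClosed_subSolutions : IsClosed (subSolutions p n A b) :=
  isClosed_Ici.inter (isClosed_le (continuous_const.tapp continuous_id) continuous_const)

theorem mem_subSolutions_iff (hA : ∀ i js, A i js = s * identT p n i js - B i js)
    {x : Fin n → ℝ} :
    x ∈ subSolutions p n A b ↔ 0 ≤ x ∧ ∀ i, s * x i ^ p ≤ b i + tapp p n B x i := by
  simp only [subSolutions, Set.mem_ofPred_eq, Pi.le_def, tapp_eq_of_eq_smul_identT_sub hA,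
    sub_le_iff_le_add]

theorem supClosed_subSolutions (hB : ∀ i js, 0 ≤ B i js)
    (hA : ∀ i js, A i js = s * identT p n i js - B i js) : SupClosed (subSolutions p n A b) := by
  intro x hx y hy
  rw [mem_subSolutions_iff hA] at hx hy ⊢
  refine ⟨le_sup_of_le_left hx.1, fun i => ?_⟩
  rcases le_total (x i) (y i) with h | h
  · rw [Pi.sup_apply, sup_eq_right.mpr h]
    exact (hy.2 i).trans (add_le_add_right (tapp_mono hB hy.1 le_sup_right i) _)
  · rw [Pi.sup_apply, sup_eq_left.mpr h]
    exact (hx.2 i).trans (add_le_add_right (tapp_mono hB hx.1 le_sup_left i) _)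

theorem exists_update_mem_subSolutions (hB : ∀ i js, 0 ≤ B i js)
    (hA : ∀ i js, A i js = s * identT p n i js - B i js) {x : Fin n → ℝ}
    (hx : x ∈ subSolutions p n A b) {i : Fin n} (hi : tapp p n A x i < b i) :
    ∃ ε > 0, Function.update x i (x i + ε) ∈ subSolutions p n A b := by
  rw [tapp_eq_of_eq_smul_identT_sub hA, sub_lt_iff_lt_add'] at hi
  rw [mem_subSolutions_iff hA] at hx
  have hlim : Tendsto (fun ε => s * (x i + ε) ^ p) (𝓝 0) (𝓝 (s * x i ^ p)) := by
    simpa using ((by fun_prop : Continuous fun ε : ℝ => s * (x i + ε) ^ p).tendsto 0)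
  obtain ⟨ε, hε, hεlt⟩ := ((eventually_mem_nhdsWithin (s := Set.Ioi 0)).and
    ((hlim.eventually_lt_const hi).filter_mono nhdsWithin_le_nhds)).exists
  set x' := Function.update x i (x i + ε)
  have hxx' : x ≤ x' := fun k => by
    rcases eq_or_ne k i with rfl | hk
    · simpa [x'] using le_of_lt hε
    · simp [x', hk]
  refine ⟨ε, hε, (mem_subSolutions_iff hA).2 ⟨hx.1.trans hxx', fun k => ?_⟩⟩
  have hmono := tapp_mono hB hx.1 hxx' k
  rcases eq_or_ne k i with rfl | hk
  · rw [Function.update_self]; linarith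
  · rw [Function.update_of_ne hk]; linarith [hx.2 k]

theorem exists_le_tapp_of_not_isBounded (hp : p ≠ 0)
    (hA : ∀ i js, A i js = s * identT p n i js - B i js)
    (h : ¬ Bornology.IsBounded (subSolutions p n A b)) :
    ∃ u : Fin n → ℝ, 0 ≤ u ∧ u ≠ 0 ∧ ∀ i, s * u i ^ p ≤ tapp p n B u i := by
  have hfar (r : ℝ) : ∃ y ∈ subSolutions p n A b, r < ‖y‖ := by
    by_contra! hr
    exact h ((Metric.isBounded_iff_subset_closedBall 0).2
      ⟨r, fun y hy => mem_closedBall_zero_iff.2 (hr y hy)⟩)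
  choose y hyS hy using fun k : ℕ => hfar k
  have hy0 (k) : 0 < ‖y k‖ := (Nat.cast_nonneg k).trans_lt (hy k)
  -- on the unit sphere, the rescaled inequalities lose their `b` term in the limit
  set u := fun k => ‖y k‖⁻¹ • y k
  have hu (k) : u k ∈ Metric.sphere 0 1 := by simp [u, norm_smul, (hy0 k).ne']
  have hu0 (k) : 0 ≤ u k := smul_nonneg (by positivity) ((mem_subSolutions_iff hA).1 (hyS k)).1
  have hineq (k i) : s * u k i ^ p ≤ (‖y k‖⁻¹) ^ p * b i + tapp p n B (u k) i := by
    have := ((mem_subSolutions_iff hA).1 (hyS k)).2 i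
    simp only [u, tapp_smul, Pi.smul_apply, smul_eq_mul, mul_pow]
    nlinarith [pow_pos (inv_pos.2 (hy0 k)) p]
  obtain ⟨u₀, hu₀, φ, hφ, hlim⟩ := (isCompact_sphere (0 : Fin n → ℝ) 1).tendsto_subseq hu
  have hsmall : Tendsto (fun k => (‖y (φ k)‖⁻¹) ^ p) atTop (𝓝 0) := by
    have hnorm : Tendsto (fun k => ‖y (φ k)‖) atTop atTop :=
      tendsto_atTop_mono (fun k => (hy (φ k)).le.trans' (by exact_mod_cast hφ.le_apply))
        tendsto_natCast_atTop_atTop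
    simpa [zero_pow hp] using (tendsto_inv_atTop_zero.comp hnorm).pow p
  have hcoord (i) : Tendsto (fun k => u (φ k) i) atTop (𝓝 (u₀ i)) :=
    ((continuous_apply i).tendsto u₀).comp hlim
  refine ⟨u₀, fun i => ge_of_tendsto (hcoord i) (Eventually.of_forall fun k => hu0 (φ k) i),
    ne_zero_of_mem_unit_sphere ⟨u₀, hu₀⟩, fun i => ?_⟩
  have hleft : Tendsto (fun k => s * u (φ k) i ^ p) atTop (𝓝 (s * u₀ i ^ p)) :=
    ((hcoord i).pow p).const_mul s
  have hright : Tendsto (fun k => (‖y (φ k)‖⁻¹) ^ p * b i + tapp p n B (u (φ k)) i) atTop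
      (𝓝 (tapp p n B u₀ i)) := by
    simpa using (hsmall.mul_const (b i)).add
      ((((continuous_apply i).comp (continuous_const.tapp continuous_id)).tendsto u₀).comp hlim)
  exact le_of_tendsto_of_tendsto' hleft hright fun k => hineq (φ k) i

theorem isBounded_subSolutions (hp : p ≠ 0) (hB : ∀ i js, 0 ≤ B i js)
    (hA : ∀ i js, A i js = s * identT p n i js - B i js) (hs : tensorSpecRad p n B < s) :
    Bornology.IsBounded (subSolutions p n A b) := by
  by_contra h
  obtain ⟨u, hu, hu0, hsu⟩ := exists_le_tapp_of_not_isBounded hp hA h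
  exact hs.not_ge (le_tensorSpecRad_of_le_tapp hp hB hu hu0 hsu)

end SubSolutions

end

/-- for a nonsingular M-tensor, if `S_l = {x ≥ 0 : A x^{m-1} ≤ b}` is
nonempty then it has a maximal element, which is the maximal nonnegative solution. -/
theorem stmt5 (m n : ℕ) (hm : 2 ≤ m) (A : Fin n → (Fin (m-1) → Fin n) → ℝ)
    (hA : IsMTensor (m-1) n A) (b : Fin n → ℝ)
    (hne : ∃ x : Fin n → ℝ, 0 ≤ x ∧ tapp (m-1) n A x ≤ b) :
    ∃ xs : Fin n → ℝ, (0 ≤ xs ∧ tapp (m-1) n A xs ≤ b) ∧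
      (∀ y : Fin n → ℝ, 0 ≤ y → tapp (m-1) n A y ≤ b → y ≤ xs) ∧
      tapp (m-1) n A xs = b ∧
      (∀ y : Fin n → ℝ, 0 ≤ y → tapp (m-1) n A y = b → y ≤ xs) := by
  obtain ⟨s, B, hB, hs, hA⟩ := hA
  have hp : m - 1 ≠ 0 := by omega
  have hcompact : IsCompact (subSolutions (m-1) n A b) :=
    Metric.isCompact_of_isClosed_isBounded isClosed_subSolutions
      (isBounded_subSolutions hp hB hA hs)
  obtain ⟨xs, hxs, hgreatest⟩ :=
    (supClosed_subSolutions hB hA).exists_isGreatest_of_isCompact hcompact hne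
  have hsol : tapp (m-1) n A xs = b := by
    ext i
    by_contra hi
    obtain ⟨ε, hε, hmem⟩ := exists_update_mem_subSolutions hB hA hxs ((hxs.2 i).lt_of_ne hi)
    have := hgreatest hmem i
    rw [Function.update_self] at this
    linarith
  exact ⟨xs, hxs, fun y hy hyb => hgreatest ⟨hy, hyb⟩, hsol, fun y hy hyb => hgreatest ⟨hy, hyb.le⟩⟩
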